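/- arXiv:1112.3015 — 2 statements merged into one kernel-verified Lean document; each statement's English description precedes it below -/
import Mathlib

section
/- For all positive integers i and N with i ≥ 1 and all positive integers m with m ≤ C(N,i), every i-element subset of a member of the first m^(i) (i+1)-element subsets of ℕ in the reverse lexicographic (colexicographic) order belongs to the first m i-element subsets of ℕ in that order; that is, if X ⊆ Y, |X| = i, |Y| = i+1, and Y ∈ F_{i+1}(m^(i)), then X ∈ F_i(m). -/
/-- The upper `i`-boundary `m^(i)`, computed greedily from the unique binomial
representation `m = C(n_i,i) + C(n_{i-1},i-1) + ... + C(n_j,j)`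
(with `n_i > n_{i-1} > ... > n_j ≥ j ≥ 1`) as
`m^(i) = C(n_i,i+1) + C(n_{i-1},i) + ... + C(n_j,j+1)`;
by convention `0^(i) = 0`. -/
def ub : ℕ → ℕ → ℕ
  | 0, _ => 0
  | i + 1, m =>
    if m = 0 then 0
    else
      Nat.choose (Nat.findGreatest (fun t => Nat.choose t (i + 1) ≤ m) (m + i + 1)) (i + 2) +
        ub i (m - Nat.choose (Nat.findGreatest (fun t => Nat.choose t (i + 1) ≤ m) (m + i + 1)) (i + 1))

/-- `firstColex i N` is the set `F_i(N)` consisting of the first `N` `i`-element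
subsets of `ℕ` in the reverse lexicographic (colexicographic) order: an `i`-element
set `X` belongs to it exactly when fewer than `N` `i`-element sets precede it. -/
def firstColex (i N : ℕ) : Set (Finset ℕ) :=
  {X | X.card = i ∧
    {Y : Finset ℕ | Y.card = i ∧
      toColex Y < toColex X}.ncard < N}

open Finset Finset.Colex

/-- The set of `i`-sets colex-below `X`. -/
def below (i : ℕ) (X : Finset ℕ) : Set (Finset ℕ) :=
  {Z : Finset ℕ | Z.card = i ∧ toColex Z < toColex X}

lemma below_finite (i : ℕ) (X : Finset ℕ) : (below i X).Finite := by
  apply Set.Finite.subset ((Finset.range (X.sup id + 1)).powerset : Finset (Finset ℕ)).finite_toSet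
  rintro Z ⟨-, hZ⟩
  rw [Finset.mem_coe, Finset.mem_powerset]
  intro a ha
  rw [Finset.mem_range, Nat.lt_succ_iff]
  exact forall_le_mono hZ.le (fun b hb => Finset.le_sup (f := id) hb) a ha

lemma below_ncard_lt {i t : ℕ} {X : Finset ℕ} (hX : X.card = i) (hXt : ∀ a ∈ X, a < t) :
    (below i X).ncard < Nat.choose t i := by
  have hsub : insert X (below i X) ⊆ ((Finset.range t).powersetCard i : Finset (Finset ℕ)) := by
    rintro Z hZ
    rw [Finset.mem_coe, Finset.mem_powersetCard]
    rcases hZ with rfl | ⟨hZc, hZlt⟩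
    · exact ⟨fun a ha => Finset.mem_range.2 (hXt a ha), hX⟩
    · refine ⟨fun a ha => Finset.mem_range.2 ?_, hZc⟩
      exact forall_lt_mono hZlt.le hXt a ha
  have h1 : (insert X (below i X)).ncard ≤ Nat.choose t i := by
    have := Set.ncard_le_ncard hsub ((Finset.range t).powersetCard i).finite_toSet
    rwa [Set.ncard_coe_finset, Finset.card_powersetCard, Finset.card_range] at this
  have h2 : X ∉ below i X := fun h => lt_irrefl _ h.2
  rw [Set.ncard_insert_of_notMem h2 (below_finite i X)] at h1
  omega

lemma below_mono {i : ℕ} {X X' : Finset ℕ} (h : toColex X ≤ toColex X') :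
    (below i X).ncard ≤ (below i X').ncard :=
  Set.ncard_le_ncard (fun _ hZ => ⟨hZ.1, lt_of_lt_of_le hZ.2 h⟩) (below_finite _ _)

lemma erase_comm' (s : Finset ℕ) (a b : ℕ) : (s.erase a).erase b = (s.erase b).erase a := by
  ext x; simp only [Finset.mem_erase]; tauto

/-- Recursion for the rank: peel off the maximum. -/
lemma below_rec (i : ℕ) (X : Finset ℕ) (hne : X.Nonempty) (hX : X.card = i + 1) :
    (below (i + 1) X).ncard
      = Nat.choose (X.max' hne) (i + 1) + (below i (X.erase (X.max' hne))).ncard := by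
  set y := X.max' hne with hy
  have hyX : y ∈ X := X.max'_mem hne
  have hele : ∀ b ∈ X.erase y, b < y := by
    intro b hb
    rw [Finset.mem_erase] at hb
    exact lt_of_le_of_ne (X.le_max' b hb.2) hb.1
  have key : ∀ Z : Finset ℕ, y ∈ Z → (toColex Z < toColex X ↔
      toColex (Z.erase y) < toColex (X.erase y)) := by
    intro Z hyZ
    rw [← Finset.sdiff_singleton_eq_erase, ← Finset.sdiff_singleton_eq_erase]
    exact (Finset.Colex.toColex_sdiff_lt_toColex_sdiff
      (Finset.singleton_subset_iff.2 hyZ) (Finset.singleton_subset_iff.2 hyX)).symm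
  have hsplit : below (i + 1) X =
      ((((Finset.range y).powersetCard (i + 1) : Finset (Finset ℕ)) : Set (Finset ℕ)))
        ∪ (insert y '' below i (X.erase y)) := by
    ext Z
    constructor
    · rintro ⟨hZc, hZlt⟩
      by_cases hyZ : y ∈ Z
      · right
        refine ⟨Z.erase y, ⟨?_, (key Z hyZ).1 hZlt⟩, Finset.insert_erase hyZ⟩
        rw [Finset.card_erase_of_mem hyZ, hZc]
        omega
      · left
        rw [Finset.mem_coe, Finset.mem_powersetCard]
        refine ⟨fun a ha => Finset.mem_range.2 ?_, hZc⟩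
        have hle : a ≤ y := forall_le_mono hZlt.le (fun b hb => X.le_max' b hb) a ha
        exact lt_of_le_of_ne hle (fun h => hyZ (h ▸ ha))
    · rintro (hZ | ⟨W, ⟨hWc, hWlt⟩, rfl⟩)
      · rw [Finset.mem_coe, Finset.mem_powersetCard] at hZ
        refine ⟨hZ.2, toColex_lt_toColex_iff_exists_forall_lt.2 ⟨y, hyX, ?_, ?_⟩⟩
        · intro hyZ
          exact lt_irrefl y (Finset.mem_range.1 (hZ.1 hyZ))
        · intro b hb _
          exact Finset.mem_range.1 (hZ.1 hb)
      · have hyW : y ∉ W := fun h => lt_irrefl y (forall_lt_mono hWlt.le hele y h)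
        have hmem : y ∈ insert y W := Finset.mem_insert_self y W
        refine ⟨?_, (key _ hmem).2 ?_⟩
        · rw [Finset.card_insert_of_notMem hyW, hWc]
        · rwa [Finset.erase_insert hyW]
  have hdisj : Disjoint
      (((Finset.range y).powersetCard (i + 1) : Finset (Finset ℕ)) : Set (Finset ℕ))
      (insert y '' below i (X.erase y)) := by
    rw [Set.disjoint_left]
    rintro Z hZ ⟨W, _, rfl⟩
    rw [Finset.mem_coe, Finset.mem_powersetCard] at hZ
    exact lt_irrefl y (Finset.mem_range.1 (hZ.1 (Finset.mem_insert_self y W)))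
  have himage : (insert y '' below i (X.erase y)).ncard = (below i (X.erase y)).ncard := by
    apply Set.ncard_image_of_injOn
    intro W1 h1 W2 h2 he
    have hy1 : y ∉ W1 := fun h => lt_irrefl y (forall_lt_mono h1.2.le hele y h)
    have hy2 : y ∉ W2 := fun h => lt_irrefl y (forall_lt_mono h2.2.le hele y h)
    rw [← Finset.erase_insert hy1, ← Finset.erase_insert hy2, he]
  rw [hsplit, Set.ncard_union_eq hdisj (Finset.finite_toSet _)
      ((below_finite i (X.erase y)).image _), himage, Set.ncard_coe_finset,
    Finset.card_powersetCard, Finset.card_range]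

/-- Lower bound on binomials: `t ≤ C(t, k+1) + k + 1`. -/
lemma le_choose_add (t k : ℕ) : t ≤ Nat.choose t (k + 1) + k + 1 := by
  induction t with
  | zero => omega
  | succ s IH =>
    rcases le_or_gt (s + 1) (k + 1) with h | h
    · omega
    · have h1 : 1 ≤ Nat.choose s k := Nat.choose_pos (by omega)
      have h2 : Nat.choose (s + 1) (k + 1) = Nat.choose s k + Nat.choose s (k + 1) :=
        Nat.choose_succ_succ' s k
      omega

lemma ub_zero (i : ℕ) : ub i 0 = 0 := by
  cases i <;> simp [ub]

section

variable {i m : ℕ} (hm : 1 ≤ m)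

private lemma findGreatest_facts (i m : ℕ) (hm : 1 ≤ m) :
    Nat.choose (Nat.findGreatest (fun t => Nat.choose t (i + 1) ≤ m) (m + i + 1)) (i + 1) ≤ m ∧
    m < Nat.choose (Nat.findGreatest (fun t => Nat.choose t (i + 1) ≤ m) (m + i + 1) + 1) (i + 1) ∧
    i + 1 ≤ Nat.findGreatest (fun t => Nat.choose t (i + 1) ≤ m) (m + i + 1) := by
  set P : ℕ → Prop := fun t => Nat.choose t (i + 1) ≤ m with hP
  set n := Nat.findGreatest P (m + i + 1) with hn
  have hwit : P (i + 1) := by simp [hP, Nat.choose_self]; omega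
  have hspec : P n := Nat.findGreatest_spec (by omega) hwit
  have hge : i + 1 ≤ n := Nat.le_findGreatest (by omega) hwit
  refine ⟨hspec, ?_, hge⟩
  by_contra hcon
  push_neg at hcon
  have hbd : n + 1 ≤ m + i + 1 := by
    have := le_choose_add (n + 1) i
    omega
  exact Nat.findGreatest_is_greatest (Nat.lt_succ_self n) hbd hcon

end

/-- Key bound: if `m ≤ C(t,i)` then `ub i m ≤ C(t,i+1)`. -/
lemma ub_le (i : ℕ) : ∀ t m : ℕ, m ≤ Nat.choose t i → ub i m ≤ Nat.choose t (i + 1) := by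
  induction i with
  | zero => intro t m _; simp [ub]
  | succ i IH =>
    intro t m hm
    show ub (i + 1) m ≤ Nat.choose t (i + 2)
    rcases Nat.eq_zero_or_pos m with rfl | hm1
    · simp [ub_zero]
    obtain ⟨hn1, hn2, hni⟩ := findGreatest_facts i m hm1
    set n := Nat.findGreatest (fun t => Nat.choose t (i + 1) ≤ m) (m + i + 1) with hn
    have hub : ub (i + 1) m = Nat.choose n (i + 2) + ub i (m - Nat.choose n (i + 1)) := by
      rw [ub, if_neg (by omega)]
    have hti : i + 1 ≤ t := by
      by_contra h
      rw [Nat.choose_eq_zero_of_lt (by omega)] at hm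
      omega
    have hnt : n ≤ t := by
      by_contra h
      push_neg at h
      have h1 : Nat.choose (t + 1) (i + 1) ≤ Nat.choose n (i + 1) :=
        Nat.choose_le_choose (i + 1) h
      have h2 : Nat.choose (t + 1) (i + 1) = Nat.choose t i + Nat.choose t (i + 1) :=
        Nat.choose_succ_succ' t i
      have h3 : 1 ≤ Nat.choose t i := Nat.choose_pos (by omega)
      omega
    have hrec : Nat.choose (n + 1) (i + 1) = Nat.choose n i + Nat.choose n (i + 1) :=
      Nat.choose_succ_succ' n i
    have hm' : m - Nat.choose n (i + 1) ≤ Nat.choose n i := by omega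
    have hIH : ub i (m - Nat.choose n (i + 1)) ≤ Nat.choose n (i + 1) := IH n _ hm'
    rcases eq_or_lt_of_le hnt with rfl | hlt
    · have : m = Nat.choose n (i + 1) := le_antisymm hm hn1
      rw [hub, this, Nat.sub_self, ub_zero]
      omega
    · have h4 : Nat.choose (n + 1) (i + 2) = Nat.choose n (i + 1) + Nat.choose n (i + 2) :=
        Nat.choose_succ_succ' n (i + 1)
      have h5 : Nat.choose (n + 1) (i + 2) ≤ Nat.choose t (i + 2) :=
        Nat.choose_le_choose (i + 2) hlt
      omega

/-- Main lemma: membership of `Y` among the first `ub i m` `(i+1)`-sets implies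
membership of `Y` minus its minimum among the first `m` `i`-sets. -/
lemma main_lemma : ∀ i : ℕ, 1 ≤ i → ∀ (m : ℕ) (Y : Finset ℕ) (_ : 1 ≤ m)
    (hne : Y.Nonempty) (_ : Y.card = i + 1),
    (below (i + 1) Y).ncard < ub i m → (below i (Y.erase (Y.min' hne))).ncard < m := by
  intro i
  induction i with
  | zero => omega
  | succ i' IH =>
    intro _ m Y hm hne hY h
    obtain ⟨hn1, hn2, hni⟩ := findGreatest_facts i' m hm
    set n := Nat.findGreatest (fun t => Nat.choose t (i' + 1) ≤ m) (m + i' + 1) with hn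
    rw [ub, if_neg (by omega)] at h
    set y := Y.max' hne with hy
    set y0 := Y.min' hne with hy0
    have hcard2 : 1 < Y.card := by omega
    have hy0y : y0 < y := Y.min'_lt_max'_of_card hcard2
    have hyY : y ∈ Y := Y.max'_mem hne
    have hy0Y : y0 ∈ Y := Y.min'_mem hne
    rw [below_rec (i' + 1) Y hne hY] at h
    rw [← hy, ← hn] at h
    have hcc : Nat.choose y (i' + 1 + 1) = Nat.choose y (i' + 2) := rfl
    rw [hcc] at h
    set A := (below (i' + 1) (Y.erase y)).ncard with hA
    -- facts about Y.erase y0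
    have hy0card : (Y.erase y0).card = i' + 1 + 1 - 1 := by
      rw [Finset.card_erase_of_mem hy0Y, hY]
    have hne' : (Y.erase y0).Nonempty := Finset.card_pos.1 (by omega)
    rcases lt_trichotomy y n with hyn | hyn | hyn
    · -- y < n : everything below fits in range n
      have hlt : ∀ a ∈ Y.erase y0, a < n :=
        fun a ha => lt_of_le_of_lt (Y.le_max' a (Finset.mem_of_mem_erase ha)) hyn
      have := below_ncard_lt (show (Y.erase y0).card = i' + 1 by omega) hlt
      omega
    · -- y = n
      have hAub : A < ub i' (m - Nat.choose n (i' + 1)) := by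
        rw [hyn] at h; omega
      have hm'pos : 1 ≤ m - Nat.choose n (i' + 1) := by
        by_contra hc
        have : m - Nat.choose n (i' + 1) = 0 := by omega
        rw [this, ub_zero] at hAub
        omega
      have hi'pos : 1 ≤ i' := by
        by_contra hc
        have : i' = 0 := by omega
        rw [this] at hAub
        simp [ub] at hAub
      -- apply IH to Y.erase y
      have hney : (Y.erase y).Nonempty := by
        refine ⟨y0, Finset.mem_erase.2 ⟨by omega, hy0Y⟩⟩
      have hcardy : (Y.erase y).card = i' + 1 := by
        rw [Finset.card_erase_of_mem hyY, hY]
        omega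
      have hminy : (Y.erase y).min' hney = y0 := by
        apply le_antisymm
        · exact (Y.erase y).min'_le y0 (Finset.mem_erase.2 ⟨by omega, hy0Y⟩)
        · exact Y.min'_le _ (Finset.mem_of_mem_erase ((Y.erase y).min'_mem hney))
      have hIH := IH hi'pos (m - Nat.choose n (i' + 1)) (Y.erase y) hm'pos hney hcardy hAub
      rw [hminy] at hIH
      -- decompose the goal via below_rec on Y.erase y0
      have hmax' : (Y.erase y0).max' hne' = y := by
        apply le_antisymm
        · exact Y.le_max' _ (Finset.mem_of_mem_erase ((Y.erase y0).max'_mem hne'))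
        · exact (Y.erase y0).le_max' y (Finset.mem_erase.2 ⟨by omega, hyY⟩)
      have hrec := below_rec i' (Y.erase y0) hne' (by omega)
      rw [hmax', erase_comm' Y y0 y] at hrec
      rw [hrec]
      have h7 : Nat.choose y (i' + 1) = Nat.choose n (i' + 1) := by rw [hyn]
      omega
    · -- y > n : contradiction
      have h1 : Nat.choose (n + 1) (i' + 2) ≤ Nat.choose y (i' + 2) :=
        Nat.choose_le_choose (i' + 2) hyn
      have h2 : Nat.choose (n + 1) (i' + 2) = Nat.choose n (i' + 1) + Nat.choose n (i' + 2) :=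
        Nat.choose_succ_succ' n (i' + 1)
      have h3 : Nat.choose n (i' + 1) < ub i' (m - Nat.choose n (i' + 1)) := by omega
      have h4 : Nat.choose (n + 1) (i' + 1) = Nat.choose n i' + Nat.choose n (i' + 1) :=
        Nat.choose_succ_succ' n i'
      have h5 : m - Nat.choose n (i' + 1) ≤ Nat.choose n i' := by omega
      have h6 : ub i' (m - Nat.choose n (i' + 1)) ≤ Nat.choose n (i' + 1) := ub_le i' n _ h5
      omega

/-- for positive integers `i`, `N` and `m` with `m ≤ C(N,i)`, every
`i`-element subset of a member of `F_{i+1}(m^(i))` belongs to `F_i(m)`. -/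
theorem subset_firstColex_of_mem_firstColex_ub
    (i N m : ℕ) (hi : 1 ≤ i) (hN : 0 < N) (hm : 0 < m) (hmN : m ≤ Nat.choose N i)
    (X Y : Finset ℕ) (hXY : X ⊆ Y) (hX : X.card = i) (hY : Y.card = i + 1)
    (hYF : Y ∈ firstColex (i + 1) (ub i m)) :
    X ∈ firstColex i m := by
  have hne : Y.Nonempty := Finset.card_pos.1 (by omega)
  have hYlt : (below (i + 1) Y).ncard < ub i m := hYF.2
  have hmain := main_lemma i hi m Y hm hne hY hYlt
  -- X = Y.erase a for some a ∈ Y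
  have hsd : (Y \ X).card = 1 := by
    rw [Finset.card_sdiff_of_subset hXY, hX, hY]
    omega
  obtain ⟨a, ha⟩ := Finset.card_eq_one.1 hsd
  have haY : a ∈ Y := by
    have : a ∈ Y \ X := ha ▸ Finset.mem_singleton_self a
    exact (Finset.mem_sdiff.1 this).1
  have hXa : X = Y.erase a := by
    rw [← Finset.sdiff_singleton_eq_erase, ← ha, Finset.sdiff_sdiff_eq_self hXY]
  have hle : toColex X ≤ toColex (Y.erase (Y.min' hne)) := by
    rw [hXa]
    exact (Finset.Colex.erase_le_erase haY (Y.min'_mem hne)).2 (Y.min'_le a haY)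
  exact ⟨hX, lt_of_le_of_lt (below_mono hle) hmain⟩
end

section
/- For every integer k ≥ 2 and every integer n with 1 ≤ n ≤ 2^k, one has φ_k(n) ≤ max over all decompositions n = n₀ + n₁ with n₀ ≥ n₁ ≥ 0 and n₀ ≤ 2^{k−1} of the quantity min(φ_{k−1}(n₀) + φ_{k−1}(n₁), n₁ + φ_{k−1}(n₁)), where φ_{k−1}(0) := 0. -/
open scoped Classical in
/-- The `k`-dimensional hypercube graph `Q_k`: vertices are the binary strings
`{0,1}^k` (modelled as `Fin k → Bool`), two vertices being adjacent iff they differ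
in exactly one coordinate. -/
noncomputable def Qcube (k : ℕ) : SimpleGraph (Fin k → Bool) :=
  SimpleGraph.fromRel fun x y =>
    (Finset.univ.filter fun j : Fin k => x j ≠ y j).card = 1

open scoped Classical in
/-- The number of full vertices (vertices of degree `k`) of the subgraph of `Q_k`
induced by the vertex set `S`. -/
noncomputable def fullCount (k : ℕ) (S : Finset (Fin k → Bool)) : ℕ :=
  (S.filter fun v => (S.filter fun w => (Qcube k).Adj v w).card = k).card

open scoped Classical in
/-- `phi k n` is the maximum, over all sets `S ⊆ {0,1}^k` with `|S| = n`, of the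
number of full vertices of the induced subgraph `Q_k[S]` (with `phi k 0 = 0`). -/
noncomputable def phi (k n : ℕ) : ℕ :=
  ((Finset.univ : Finset (Fin k → Bool)).powersetCard n).sup (fullCount k)

open scoped Classical

section Aux

lemma qcube_adj {k : ℕ} {v w : Fin k → Bool} :
    (Qcube k).Adj v w ↔ ∃ j, w = Function.update v j (!v j) := by
  have hsymm : ∀ (a b : Fin k → Bool),
      (Finset.univ.filter fun j : Fin k => a j ≠ b j) =
      (Finset.univ.filter fun j : Fin k => b j ≠ a j) := by
    intro a b; apply Finset.filter_congr; intro j _; simp [ne_comm]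
  constructor
  · rintro ⟨hne, h⟩
    have hc : (Finset.univ.filter fun j : Fin k => v j ≠ w j).card = 1 := by
      rcases h with h | h
      · exact h
      · rw [hsymm]; exact h
    obtain ⟨j, hj⟩ := Finset.card_eq_one.mp hc
    refine ⟨j, funext fun i => ?_⟩
    by_cases hij : i = j
    · subst hij
      have : i ∈ Finset.univ.filter fun j : Fin k => v j ≠ w j := by
        rw [hj]; exact Finset.mem_singleton_self i
      have hne' : v i ≠ w i := (Finset.mem_filter.mp this).2
      rw [Function.update_self]
      revert hne'; cases v i <;> cases w i <;> simp
    · have : i ∉ Finset.univ.filter fun j : Fin k => v j ≠ w j := by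
        rw [hj]; simpa using hij
      have heq : v i = w i := by simpa using this
      rw [Function.update_of_ne hij, heq]
  · rintro ⟨j, rfl⟩
    have hfil : (Finset.univ.filter fun i : Fin k =>
        v i ≠ Function.update v j (!v j) i) = {j} := by
      ext i
      by_cases hij : i = j
      · subst hij; simp [Function.update_self]
      · simp [Function.update_of_ne hij, hij]
    constructor
    · intro h
      have := congrFun h j
      simp [Function.update_self] at this
    · left
      show (Finset.univ.filter fun i : Fin k =>
        v i ≠ Function.update v j (!v j) i).card = 1
      rw [hfil]; simp

lemma flips_injective {k : ℕ} (v : Fin k → Bool) :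
    Function.Injective (fun j : Fin k => Function.update v j (!v j)) := by
  intro j j' h
  by_contra hne
  have := congrFun h j
  simp only [Function.update_self, Function.update_of_ne hne] at this
  exact Bool.not_ne_self (v j) this

lemma full_iff {k : ℕ} (S : Finset (Fin k → Bool)) (v : Fin k → Bool) :
    (S.filter fun w => (Qcube k).Adj v w).card = k ↔
      ∀ j, Function.update v j (!v j) ∈ S := by
  set N : Finset (Fin k → Bool) :=
    Finset.univ.image (fun j : Fin k => Function.update v j (!v j)) with hN
  have hNcard : N.card = k := by
    rw [hN, Finset.card_image_of_injective _ (flips_injective v)]; simp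
  have hfil : (S.filter fun w => (Qcube k).Adj v w) = S.filter (· ∈ N) := by
    apply Finset.filter_congr; intro w _
    simp [qcube_adj, hN, eq_comm]
  rw [hfil]
  constructor
  · intro h j
    have hsub : S.filter (· ∈ N) ⊆ N := fun w hw => (Finset.mem_filter.mp hw).2
    have : S.filter (· ∈ N) = N :=
      Finset.eq_of_subset_of_card_le hsub (by rw [h, hNcard])
    have hj : Function.update v j (!v j) ∈ S.filter (· ∈ N) := by
      rw [this, hN]; exact Finset.mem_image_of_mem _ (Finset.mem_univ j)
    exact (Finset.mem_filter.mp hj).1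
  · intro h
    have : S.filter (· ∈ N) = N := by
      apply Finset.Subset.antisymm (fun w hw => (Finset.mem_filter.mp hw).2)
      intro w hw
      rw [Finset.mem_filter]
      refine ⟨?_, hw⟩
      rw [hN] at hw
      obtain ⟨j, _, rfl⟩ := Finset.mem_image.mp hw
      exact h j
    rw [this, hNcard]

lemma fullCount_eq {k : ℕ} (S : Finset (Fin k → Bool)) :
    fullCount k S =
      (S.filter fun v => ∀ j, Function.update v j (!v j) ∈ S).card := by
  unfold fullCount
  congr 1
  apply Finset.filter_congr
  intro v _
  exact full_iff S v

noncomputable def tailSet {m : ℕ} (S : Finset (Fin (m+1) → Bool)) (b : Bool) :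
    Finset (Fin m → Bool) :=
  (S.filter fun v => v 0 = b).image Fin.tail

lemma mem_tailSet {m : ℕ} {S : Finset (Fin (m+1) → Bool)} {b : Bool}
    {x : Fin m → Bool} : x ∈ tailSet S b ↔ Fin.cons b x ∈ S := by
  unfold tailSet
  simp only [Finset.mem_image, Finset.mem_filter]
  constructor
  · rintro ⟨v, ⟨hv, h0⟩, rfl⟩
    rw [← h0, Fin.cons_self_tail]; exact hv
  · intro h
    exact ⟨Fin.cons b x, ⟨h, by simp⟩, by simp [Fin.tail_cons]⟩

lemma tail_injOn {m : ℕ} (T : Finset (Fin (m+1) → Bool)) (b : Bool)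
    (hT : ∀ v ∈ T, v 0 = b) : Set.InjOn Fin.tail (T : Set (Fin (m+1) → Bool)) := by
  intro v hv w hw h
  have h0 : v 0 = w 0 := by rw [hT v hv, hT w hw]
  calc v = Fin.cons (v 0) (Fin.tail v) := (Fin.cons_self_tail v).symm
    _ = Fin.cons (w 0) (Fin.tail w) := by rw [h0, h]
    _ = w := Fin.cons_self_tail w

lemma tailSet_card {m : ℕ} (S : Finset (Fin (m+1) → Bool)) (b : Bool) :
    (tailSet S b).card = (S.filter fun v => v 0 = b).card := by
  unfold tailSet
  apply Finset.card_image_of_injOn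
  apply tail_injOn
  intro v hv; exact (Finset.mem_filter.mp hv).2

lemma card_bool_split {m : ℕ} (T : Finset (Fin (m+1) → Bool)) :
    (T.filter fun v => v 0 = false).card + (T.filter fun v => v 0 = true).card
      = T.card := by
  have h : T.filter (fun v => v 0 = true) = T.filter (fun v => ¬ (v 0 = false)) :=
    Finset.filter_congr (by intro v _; simp)
  rw [h]
  exact Finset.card_filter_add_card_filter_not _

lemma card_split {m : ℕ} (S : Finset (Fin (m+1) → Bool)) :
    (tailSet S false).card + (tailSet S true).card = S.card := by
  rw [tailSet_card, tailSet_card]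
  exact card_bool_split S

lemma tailSet_card_le {m : ℕ} (S : Finset (Fin (m+1) → Bool)) (b : Bool) :
    (tailSet S b).card ≤ 2 ^ m := by
  calc (tailSet S b).card ≤ Fintype.card (Fin m → Bool) := Finset.card_le_univ _
    _ = 2 ^ m := by simp

lemma tail_update_succ {m : ℕ} (v : Fin (m+1) → Bool) (j : Fin m) (c : Bool) :
    Fin.tail (Function.update v j.succ c) = Function.update (Fin.tail v) j c := by
  funext i
  simp only [Fin.tail, Function.update_apply, Fin.succ_inj]

lemma tail_update_zero {m : ℕ} (v : Fin (m+1) → Bool) (c : Bool) :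
    Fin.tail (Function.update v 0 c) = Fin.tail v := by
  funext i
  simp [Fin.tail, Function.update_apply, Fin.succ_ne_zero]

lemma cons_update {m : ℕ} (v : Fin (m+1) → Bool) (j : Fin m) (c : Bool) :
    Fin.cons (v 0) (Function.update (Fin.tail v) j c)
      = Function.update v j.succ c := by
  conv_rhs => rw [← Fin.cons_self_tail (Function.update v j.succ c)]
  rw [tail_update_succ, Function.update_of_ne (Fin.succ_ne_zero j).symm]

lemma claim1 {m : ℕ} (S : Finset (Fin (m+1) → Bool)) (b : Bool) :
    (((S.filter fun v => ∀ j, Function.update v j (!v j) ∈ S).filter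
        fun v => v 0 = b).card) ≤ fullCount m (tailSet S b) := by
  rw [fullCount_eq]
  apply Finset.card_le_card_of_injOn Fin.tail
  · intro v hv
    rw [Finset.mem_coe, Finset.mem_filter] at hv
    obtain ⟨hv', h0⟩ := hv
    rw [Finset.mem_filter] at hv'
    obtain ⟨hvS, hflip⟩ := hv'
    rw [Finset.mem_coe, Finset.mem_filter]
    constructor
    · rw [mem_tailSet, ← h0, Fin.cons_self_tail]; exact hvS
    · intro j
      rw [mem_tailSet, ← h0]
      have : Fin.tail v j = v j.succ := rfl
      rw [this, cons_update]
      exact hflip j.succ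
  · apply tail_injOn _ b
    intro v hv
    exact (Finset.mem_filter.mp hv).2

lemma claim2 {m : ℕ} (S : Finset (Fin (m+1) → Bool)) (b : Bool) :
    (((S.filter fun v => ∀ j, Function.update v j (!v j) ∈ S).filter
        fun v => v 0 = b).card) ≤ (tailSet S (!b)).card := by
  apply Finset.card_le_card_of_injOn Fin.tail
  · intro v hv
    rw [Finset.mem_coe, Finset.mem_filter] at hv
    obtain ⟨hv', h0⟩ := hv
    rw [Finset.mem_filter] at hv'
    obtain ⟨hvS, hflip⟩ := hv'
    rw [Finset.mem_coe, mem_tailSet, ← h0]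
    have key : Fin.cons (!v 0) (Fin.tail v) = Function.update v 0 (!v 0) := by
      conv_rhs => rw [← Fin.cons_self_tail (Function.update v 0 (!v 0))]
      rw [tail_update_zero, Function.update_self]
    rw [key]
    exact hflip 0
  · apply tail_injOn _ b
    intro v hv
    exact (Finset.mem_filter.mp hv).2

lemma fullCount_split {m : ℕ} (S : Finset (Fin (m+1) → Bool)) :
    fullCount (m+1) S ≤ fullCount m (tailSet S false) + fullCount m (tailSet S true) := by
  rw [fullCount_eq]
  rw [← card_bool_split (S.filter fun v => ∀ j, Function.update v j (!v j) ∈ S)]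
  exact Nat.add_le_add (claim1 S false) (claim1 S true)

lemma fullCount_mixed {m : ℕ} (S : Finset (Fin (m+1) → Bool)) (b : Bool) :
    fullCount (m+1) S ≤ (tailSet S b).card + fullCount m (tailSet S b) := by
  rw [fullCount_eq]
  rw [← card_bool_split (S.filter fun v => ∀ j, Function.update v j (!v j) ∈ S)]
  cases b
  · have h1 := claim2 S true
    simp only [Bool.not_true] at h1
    have h2 := claim1 S false
    exact (Nat.add_le_add h2 h1).trans (Nat.le_of_eq (Nat.add_comm _ _))
  · have h1 := claim2 S false
    simp only [Bool.not_false] at h1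
    have h2 := claim1 S true
    exact Nat.add_le_add h1 h2

lemma fullCount_le_phi {m : ℕ} (T : Finset (Fin m → Bool)) :
    fullCount m T ≤ phi m T.card :=
  Finset.le_sup (Finset.mem_powersetCard.mpr ⟨Finset.subset_univ T, rfl⟩)

end Aux

/-- for every `k ≥ 2` and `1 ≤ n ≤ 2^k`, `φ_k(n)` is at most the
maximum over all decompositions `n = n₀ + n₁` with `n₀ ≥ n₁ ≥ 0` and `n₀ ≤ 2^{k-1}`
of `min(φ_{k-1}(n₀) + φ_{k-1}(n₁), n₁ + φ_{k-1}(n₁))` (with `φ_{k-1}(0) = 0`);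
equivalently, some such decomposition achieves at least `φ_k(n)`. -/
theorem phi_le_maximin' (k n : ℕ) (hk : 2 ≤ k) (h1 : 1 ≤ n) (h2 : n ≤ 2 ^ k) :
    ∃ n₀ n₁ : ℕ, n₀ + n₁ = n ∧ n₁ ≤ n₀ ∧ n₀ ≤ 2 ^ (k - 1) ∧
      phi k n ≤ min (phi (k - 1) n₀ + phi (k - 1) n₁) (n₁ + phi (k - 1) n₁) := by
  obtain ⟨m, rfl⟩ : ∃ m, k = m + 1 := ⟨k - 1, by omega⟩
  simp only [Nat.add_sub_cancel]
  -- the sup defining phi is attained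
  have hne : ((Finset.univ : Finset (Fin (m+1) → Bool)).powersetCard n).Nonempty := by
    rw [Finset.powersetCard_nonempty]
    simpa using h2
  obtain ⟨S, hS, hsup⟩ := Finset.exists_mem_eq_sup _ hne (fullCount (m+1))
  rw [Finset.mem_powersetCard] at hS
  obtain ⟨-, hScard⟩ := hS
  have hphi : phi (m+1) n = fullCount (m+1) S := hsup
  set a := (tailSet S false).card with ha
  set c := (tailSet S true).card with hc
  have hac : a + c = n := by rw [ha, hc, card_split, hScard]
  have hbound1 : fullCount (m+1) S ≤ phi m a + phi m c :=
    le_trans (fullCount_split S)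
      (Nat.add_le_add (fullCount_le_phi _) (fullCount_le_phi _))
  rcases le_total c a with hle | hle
  · refine ⟨a, c, hac, hle, tailSet_card_le S false, ?_⟩
    rw [hphi]
    refine le_min hbound1 ?_
    exact le_trans (fullCount_mixed S true)
      (Nat.add_le_add_left (fullCount_le_phi _) _)
  · refine ⟨c, a, by omega, hle, tailSet_card_le S true, ?_⟩
    rw [hphi]
    refine le_min (by omega) ?_
    exact le_trans (fullCount_mixed S false)
      (Nat.add_le_add_left (fullCount_le_phi _) _)
end
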